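/- arXiv:2209.09064 — 2 statements merged into one kernel-verified Lean document; each statement's English description precedes it below -/
import Mathlib

section
/- Fix c > 0. Let E(v, ω, p_v, p_ω) = (1/2)(v²/c + ω²) and H_opt(v, ω, p_v, p_ω) = cω²p_v − (1/2)p_ω²v² − (1/2)c²ω²p_v² − ωp_ωv + cωp_ωp_vv be smooth functions on ℝ⁴, and let {F, G} = (∂F/∂v)(∂G/∂p_v) − (∂F/∂p_v)(∂G/∂v) + (∂F/∂ω)(∂G/∂p_ω) − (∂F/∂p_ω)(∂G/∂ω) be the canonical Poisson bracket on ℝ⁴ with coordinates (v, ω, p_v, p_ω). Then {E, H_opt} = 0 identically on ℝ⁴. -/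
/-!
Since `E` depends only on `(v, ω)`, the bracket reduces to `∂E/∂v · ∂H/∂p_v + ∂E/∂ω · ∂H/∂p_ω`.
Both momentum derivatives of `H_opt` are multiples of the same factor
`X = ω + p_ω v - c ω p_v`: `∂H/∂p_v = c ω X` and `∂H/∂p_ω = -v X`, so the bracket is
`(v / c) · c ω X - ω v X = 0`.
-/

/-- The pullback energy on `T*𝒟' ≅ ℝ⁴`. -/
noncomputable def sleighEnergy (c v ω pv pω : ℝ) : ℝ := (1 / 2) * (v ^ 2 / c + ω ^ 2)

/-- The optimal Hamiltonian of the magnetically controlled Chaplygin sleigh. -/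
noncomputable def sleighHopt (c v ω pv pω : ℝ) : ℝ :=
  c * ω ^ 2 * pv - (1 / 2) * pω ^ 2 * v ^ 2 - (1 / 2) * c ^ 2 * ω ^ 2 * pv ^ 2
    - ω * pω * v + c * ω * pω * pv * v

theorem deriv_quadratic {𝕜 : Type*} [NontriviallyNormedField 𝕜] (a b d x : 𝕜) :
    deriv (fun t => a * t ^ 2 + b * t + d) x = 2 * a * x + b := by
  have h : HasDerivAt (fun t => a * t ^ 2 + b * t + d) (a * (2 * x ^ 1) + b * 1) x :=
    (((hasDerivAt_pow 2 x).const_mul a).add ((hasDerivAt_id x).const_mul b)).add_const d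
  rw [h.deriv]
  ring

variable (c v ω pv pω : ℝ)

theorem deriv_sleighEnergy_v : deriv (fun x => sleighEnergy c x ω pv pω) v = v / c := by
  have hquad : (fun x => sleighEnergy c x ω pv pω) = fun x =>
      (1 / 2 / c) * x ^ 2 + 0 * x + (1 / 2) * ω ^ 2 := by
    funext x; unfold sleighEnergy; ring
  rw [hquad, deriv_quadratic]; ring

theorem deriv_sleighEnergy_ω : deriv (fun x => sleighEnergy c v x pv pω) ω = ω := by
  have hquad : (fun x => sleighEnergy c v x pv pω) = fun x =>
      (1 / 2) * x ^ 2 + 0 * x + (1 / 2) * (v ^ 2 / c) := by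
    funext x; unfold sleighEnergy; ring
  rw [hquad, deriv_quadratic]; ring

theorem deriv_sleighEnergy_pv : deriv (fun x => sleighEnergy c v ω x pω) pv = 0 :=
  deriv_const pv (sleighEnergy c v ω 0 pω)

theorem deriv_sleighEnergy_pω : deriv (fun x => sleighEnergy c v ω pv x) pω = 0 :=
  deriv_const pω (sleighEnergy c v ω pv 0)

theorem deriv_sleighHopt_pv :
    deriv (fun x => sleighHopt c v ω x pω) pv = c * ω * (ω + pω * v - c * ω * pv) := by
  have hquad : (fun x => sleighHopt c v ω x pω) = fun x =>
      (-(1 / 2) * c ^ 2 * ω ^ 2) * x ^ 2 + (c * ω ^ 2 + c * ω * pω * v) * x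
        + (-(1 / 2) * pω ^ 2 * v ^ 2 - ω * pω * v) := by
    funext x; unfold sleighHopt; ring
  rw [hquad, deriv_quadratic]; ring

theorem deriv_sleighHopt_pω :
    deriv (fun x => sleighHopt c v ω pv x) pω = -v * (ω + pω * v - c * ω * pv) := by
  have hquad : (fun x => sleighHopt c v ω pv x) = fun x =>
      (-(1 / 2) * v ^ 2) * x ^ 2 + (c * ω * pv * v - ω * v) * x
        + (c * ω ^ 2 * pv - (1 / 2) * c ^ 2 * ω ^ 2 * pv ^ 2) := by
    funext x; unfold sleighHopt; ring
  rw [hquad, deriv_quadratic]; ring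

/-- The canonical Poisson bracket of `E` and `H_opt` vanishes identically on ℝ⁴. -/
theorem chaplygin_energy_poisson_commutes_with_Hopt (c : ℝ) (hc : 0 < c) :
    ∀ v ω pv pω : ℝ,
      (deriv (fun x => sleighEnergy c x ω pv pω) v)
          * (deriv (fun x => sleighHopt c v ω x pω) pv)
        - (deriv (fun x => sleighEnergy c v ω x pω) pv)
          * (deriv (fun x => sleighHopt c x ω pv pω) v)
        + (deriv (fun x => sleighEnergy c v x pv pω) ω)
          * (deriv (fun x => sleighHopt c v ω pv x) pω)
        - (deriv (fun x => sleighEnergy c v ω pv x) pω)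
          * (deriv (fun x => sleighHopt c v x pv pω) ω) = 0 := by
  intro v ω pv pω
  rw [deriv_sleighEnergy_v, deriv_sleighEnergy_pv, deriv_sleighEnergy_ω, deriv_sleighEnergy_pω,
    deriv_sleighHopt_pv, deriv_sleighHopt_pω]
  field_simp [hc.ne']
  ring
end

section
/- Let α, B : ℝ → ℝ be differentiable and satisfy α'(t) = B(t) − sin α(t) and B'(t) = B(t)·cos α(t) for all t (the reduced optimal system with c = 1). Suppose α(0) = 0 and B(0) = B₀ > 0. If there exists t₁ with α(t₁) = π/2 and B(t₁) > 0, then B(t₁) = 1 + √(1 + B₀²). -/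
/-! `H_opt` is constant along solutions; it equals `B₀²/2` at `α = 0` and `B²/2 - B` at
`α = π/2`, so `B` there is the positive root of `B² - 2B = B₀²`. -/

open Real

noncomputable def chaplyginHamiltonian (α B : ℝ) : ℝ := B ^ 2 / 2 - B * sin α

theorem hasDerivAt_chaplyginHamiltonian {α B : ℝ → ℝ} {t : ℝ}
    (hα : HasDerivAt α (B t - sin (α t)) t) (hB : HasDerivAt B (B t * cos (α t)) t) :
    HasDerivAt (fun s => chaplyginHamiltonian (α s) (B s)) 0 t := by
  have hsin := (hasDerivAt_sin (α t)).comp t hα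
  have hH : HasDerivAt (fun s => chaplyginHamiltonian (α s) (B s)) _ t :=
    ((hB.pow 2).div_const 2).sub (hB.mul hsin)
  refine hH.congr_deriv ?_
  simp only [Nat.cast_ofNat]
  ring

theorem chaplyginHamiltonian_eq {α B : ℝ → ℝ}
    (hα : ∀ t, HasDerivAt α (B t - sin (α t)) t) (hB : ∀ t, HasDerivAt B (B t * cos (α t)) t)
    (t s : ℝ) : chaplyginHamiltonian (α t) (B t) = chaplyginHamiltonian (α s) (B s) :=
  is_const_of_deriv_eq_zero
    (fun u => (hasDerivAt_chaplyginHamiltonian (hα u) (hB u)).differentiableAt)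
    (fun u => (hasDerivAt_chaplyginHamiltonian (hα u) (hB u)).deriv) t s

/-- For `c ≥ 0` the other root `1 - √(1 + c)` of `b² - 2b = c` is nonpositive. -/
theorem eq_one_add_sqrt_of_sq_sub_two_mul_eq {b c : ℝ} (hc : 0 ≤ c) (hb : 0 < b)
    (h : b ^ 2 - 2 * b = c) : b = 1 + √(1 + c) := by
  have hs : √(1 + c) ^ 2 = 1 + c := sq_sqrt (by linarith)
  have hs1 : 1 ≤ √(1 + c) := one_le_sqrt.mpr (by linarith)
  have hroots : (b - (1 + √(1 + c))) * (b - (1 - √(1 + c))) = 0 := by nlinarith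
  rcases mul_eq_zero.mp hroots with hplus | hminus
  · linarith
  · linarith

theorem chaplygin_reduced_max_field_general
    (α B : ℝ → ℝ) (hα : Differentiable ℝ α) (hB : Differentiable ℝ B)
    (h1 : ∀ t, deriv α t = B t - Real.sin (α t))
    (h2 : ∀ t, deriv B t = B t * Real.cos (α t))
    (B₀ : ℝ) (hα0 : α 0 = 0) (hB0 : B 0 = B₀) :
    ∀ t₁ : ℝ, α t₁ = Real.pi / 2 → 0 < B t₁ →
      B t₁ = 1 + Real.sqrt (1 + B₀ ^ 2) := by
  intro t₁ hα1 hB1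
  have hconst := chaplyginHamiltonian_eq (fun t => h1 t ▸ (hα t).hasDerivAt)
    (fun t => h2 t ▸ (hB t).hasDerivAt) t₁ 0
  simp only [chaplyginHamiltonian, hα1, hα0, hB0, sin_pi_div_two, sin_zero] at hconst
  exact eq_one_add_sqrt_of_sq_sub_two_mul_eq (sq_nonneg B₀) hB1 (by linarith)

/-- For the reduced optimal system with `c = 1`, starting from `α(0) = 0` with field
`B(0) = B₀ > 0`, the value of the field when the trajectory reaches `α = π/2` (with
`B > 0` there) is `1 + √(1 + B₀²)`. -/
theorem chaplygin_reduced_max_field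
    (α B : ℝ → ℝ) (hα : Differentiable ℝ α) (hB : Differentiable ℝ B)
    (h1 : ∀ t, deriv α t = B t - Real.sin (α t))
    (h2 : ∀ t, deriv B t = B t * Real.cos (α t))
    (B₀ : ℝ) (hB₀ : 0 < B₀) (hα0 : α 0 = 0) (hB0 : B 0 = B₀) :
    ∀ t₁ : ℝ, α t₁ = Real.pi / 2 → 0 < B t₁ →
      B t₁ = 1 + Real.sqrt (1 + B₀ ^ 2) :=
  chaplygin_reduced_max_field_general α B hα hB h1 h2 B₀ hα0 hB0
end
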